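/- arXiv:2604.02644 — 4 statements merged into one kernel-verified Lean document; each statement's English description precedes it below -/
import Mathlib

section
/- Let G(z,u) = (G_Y(z), G_X(G_Y(z), u)) be a block-triangular map pushing forward P_Z ⊗ P_U to P_{Y,X}. Then for P_Y-almost every y, the pushforward of P_U under the map u ↦ G_X(y, u) equals the conditional distribution P_{X|Y=y}. -/
open MeasureTheory ProbabilityTheory
open scoped ENNReal

/-- If a block-triangular map `G(z,u) = (G_Y z, G_X (G_Y z, u))` pushes forward
`P_Z ⊗ P_U` to `P_{Y,X}`, then for `P_Y`-a.e. `y`, the pushforward of `P_U` under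
`u ↦ G_X (y, u)` equals the conditional distribution `P_{X|Y=y}` (given as a disintegration
kernel `κ` of `P_{Y,X}` over its first marginal `P_Y`). -/
theorem blockTriangular_pushforward_conditional
    {Z U Y X : Type*} [MeasurableSpace Z] [StandardBorelSpace Z]
    [MeasurableSpace U] [StandardBorelSpace U]
    [MeasurableSpace Y] [StandardBorelSpace Y]
    [MeasurableSpace X] [StandardBorelSpace X]
    (PZ : Measure Z) (PU : Measure U) (PYX : Measure (Y × X))
    [IsProbabilityMeasure PZ] [IsProbabilityMeasure PU] [IsProbabilityMeasure PYX]
    (PY : Measure Y) [IsProbabilityMeasure PY] (hPY : PYX.map Prod.fst = PY)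
    (κ : Kernel Y X) [IsMarkovKernel κ] (hdis : PYX = PY.compProd κ)
    (GY : Z → Y) (GX : Y × U → X)
    (hGY : Measurable GY) (hGX : Measurable GX)
    (hpush : (PZ.prod PU).map (fun p : Z × U => (GY p.1, GX (GY p.1, p.2))) = PYX) :
    ∀ᵐ y ∂PY, PU.map (fun u => GX (y, u)) = κ y := by
  have hG : Measurable (fun p : Z × U => (GY p.1, GX (GY p.1, p.2))) :=
    (hGY.comp measurable_fst).prod
      (hGX.comp ((hGY.comp measurable_fst).prod measurable_snd))
  -- the candidate kernel η y = PU.map (GX (y, ·))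
  set η : Kernel Y X :=
    ⟨fun y => PU.map (fun u => GX (y, u)), by
      refine Measure.measurable_of_measurable_coe _ (fun s hs => ?_)
      have hGXy : ∀ y : Y, Measurable fun u => GX (y, u) := fun y =>
        hGX.comp measurable_prodMk_left
      have h : ∀ y, PU.map (fun u => GX (y, u)) s = PU (Prod.mk y ⁻¹' (GX ⁻¹' s)) := by
        intro y
        rw [Measure.map_apply (hGXy y) hs]
        rfl
      simp_rw [h]
      exact measurable_measure_prodMk_left (hGX hs)⟩ with hηdef
  have hηapp : ∀ y, η y = PU.map (fun u => GX (y, u)) := fun y => rfl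
  have hGXy : ∀ y : Y, Measurable fun u => GX (y, u) := fun y =>
    hGX.comp measurable_prodMk_left
  have hmk : IsMarkovKernel η := by
    refine ⟨fun y => ?_⟩
    rw [hηapp]
    exact Measure.isProbabilityMeasure_map (hGXy y).aemeasurable
  -- PY.compProd η = PYX
  have hcomp : PY.compProd η = PYX := by
    -- first: PZ.map GY = PY
    have hmapGY : PZ.map GY = PY := by
      have h1 : PYX.map Prod.fst = (PZ.prod PU).map (GY ∘ Prod.fst) := by
        rw [← hpush, Measure.map_map measurable_fst hG]
        rfl
      rw [← Measure.map_map hGY measurable_fst, Measure.map_fst_prod] at h1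
      simpa using (h1.symm.trans hPY)
    ext s hs
    rw [Measure.compProd_apply hs, ← hpush,
      Measure.map_apply hG hs, Measure.prod_apply (hG hs)]
    have hsec : ∀ z : Z,
        PU (Prod.mk z ⁻¹' ((fun p : Z × U => (GY p.1, GX (GY p.1, p.2))) ⁻¹' s))
          = η (GY z) (Prod.mk (GY z) ⁻¹' s) := by
      intro z
      rw [hηapp, Measure.map_apply (hGXy (GY z)) (measurable_prodMk_left hs)]
      rfl
    simp_rw [hsec]
    rw [← hmapGY, lintegral_map (Kernel.measurable_kernel_prodMk_left hs) hGY]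
  -- uniqueness of disintegration
  have : Nonempty (Y × X) := PYX.nonempty_of_neZero
  have : Nonempty X := ⟨this.some.2⟩
  have hfst : PYX.fst = PY := by rw [Measure.fst, hPY]
  have h1 : ∀ᵐ y ∂PY, η y = PYX.condKernel y := by
    rw [← hfst]
    exact eq_condKernel_of_measure_eq_compProd η (by rw [hfst]; exact hcomp.symm)
  have h2 : ∀ᵐ y ∂PY, κ y = PYX.condKernel y := by
    rw [← hfst]
    exact eq_condKernel_of_measure_eq_compProd κ (by rw [hfst]; exact hdis)
  filter_upwards [h1, h2] with y hy1 hy2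
  rw [← hηapp, hy1, hy2]
end

section
/- Upper bound of Proposition 1: Suppose W_{c_X} satisfies the triangle inequality (e.g., c_X is a power of a metric inducing a Wasserstein distance). For any encoder Φ_Y : Y → Z and map Ḡ_X : Z × U → X, the conditional OT cost R_Y(Ḡ_X; Φ_Y) is bounded above by R_Z(Ḡ_X; Φ_Y) + E(Φ_Y), where E(Φ_Y) = ∫_Y W_{c_X}(P_{X|Y=y}, P_{X|Z=Φ_Y(y)}) P_Y(dy) is the conditional representation error. -/
open MeasureTheory ProbabilityTheory
open scoped ENNReal

/-- The optimal transport cost `W_c(μ, ν)`: the infimum, over couplings `π` of `μ` and `ν`,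
of `∫ c dπ`. -/
noncomputable def otCost {α β : Type*} [MeasurableSpace α] [MeasurableSpace β]
    (c : α → β → ℝ≥0∞) (μ : Measure α) (ν : Measure β) : ℝ≥0∞ :=
  ⨅ π ∈ {π : Measure (α × β) | π.map Prod.fst = μ ∧ π.map Prod.snd = ν},
    ∫⁻ p, c p.1 p.2 ∂π


section OTAuxSection

open MeasureTheory Set Filter Topology

namespace OTProofAux

/-- The set of sequences whose first `l.length` values are bounded by the entries of `l`. -/
def bddSeqs (l : List ℕ) : Set (ℕ → ℕ) := {σ | ∀ i < l.length, σ i ≤ l.getD i 0}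

lemma bddSeqs_nil : bddSeqs [] = univ := by
  ext σ; simp [bddSeqs]

lemma bddSeqs_append (l : List ℕ) (n : ℕ) :
    bddSeqs (l ++ [n]) = bddSeqs l ∩ {σ | σ l.length ≤ n} := by
  ext σ
  simp only [bddSeqs, mem_setOf_eq, mem_inter_iff, List.length_append, List.length_cons,
    List.length_nil]
  constructor
  · intro h
    refine ⟨fun i hi => ?_, ?_⟩
    · rw [← List.getD_append l ([n]) 0 i hi]
      exact h i (by omega)
    · have := h l.length (by omega)
      rwa [List.getD_append_right l ([n]) 0 l.length le_rfl, Nat.sub_self] at this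
  · rintro ⟨h1, h2⟩ i hi
    rcases lt_or_ge i l.length with hil | hil
    · rw [List.getD_append l ([n]) 0 i hil]; exact h1 i hil
    · have : i = l.length := by omega
      subst this
      rwa [List.getD_append_right l ([n]) 0 _ le_rfl, Nat.sub_self]

lemma iUnion_bddSeqs_append (l : List ℕ) : ⋃ n, bddSeqs (l ++ [n]) = bddSeqs l := by
  ext σ
  simp only [mem_iUnion, bddSeqs_append, mem_inter_iff, mem_setOf_eq]
  constructor
  · rintro ⟨n, h, _⟩; exact h
  · intro h; exact ⟨σ l.length, h, le_rfl⟩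

variable {Z : Type*} [TopologicalSpace Z] [PolishSpace Z] [MeasurableSpace Z] [BorelSpace Z]

lemma exists_compact_subset_of_analytic_aux (f : (ℕ → ℕ) → Z) (hf : Continuous f)
    (ν : Measure Z) [IsFiniteMeasure ν] {ε : ℝ≥0∞} (hε0 : ε ≠ 0) (hεtop : ε ≠ ∞) :
    ∃ C : Set Z, IsCompact C ∧ C ⊆ range f ∧ ν (range f) ≤ ν C + ε := by
  -- step: choose the next bound
  have hpick : ∀ l : List ℕ, ∃ n : ℕ,
      ν (f '' bddSeqs l) ≤ ν (f '' bddSeqs (l ++ [n])) + ε * 2⁻¹ ^ (l.length + 1) := by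
    intro l
    set δ : ℝ≥0∞ := ε * 2⁻¹ ^ (l.length + 1) with hδ
    have hδ0 : δ ≠ 0 := by
      simp [hδ, hε0, pow_eq_zero_iff]
    have hsup : ν (f '' bddSeqs l) = ⨆ n, ν (f '' bddSeqs (l ++ [n])) := by
      rw [← Monotone.measure_iUnion (fun a b hab => image_mono (by
        rw [bddSeqs_append, bddSeqs_append]
        exact inter_subset_inter_right _ (fun σ hσ => le_trans hσ hab)))]
      rw [← image_iUnion, iUnion_bddSeqs_append]
    rcases eq_or_ne (ν (f '' bddSeqs l)) 0 with h0 | h0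
    · exact ⟨0, by simp [h0]⟩
    have hlt : ν (f '' bddSeqs l) - δ < ν (f '' bddSeqs l) :=
      ENNReal.sub_lt_self (measure_ne_top _ _) h0 hδ0
    nth_rewrite 2 [hsup] at hlt
    rw [lt_iSup_iff] at hlt
    obtain ⟨n, hn⟩ := hlt
    refine ⟨n, ?_⟩
    have hδtop : δ ≠ ∞ := ENNReal.mul_ne_top hεtop (ENNReal.pow_ne_top (by simp))
    rcases le_or_gt δ (ν (f '' bddSeqs l)) with hle | hlt'
    · exact ((ENNReal.sub_lt_iff_lt_right hδtop hle).mp hn).le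
    · exact le_trans hlt'.le le_add_self
  choose pick hpickspec using hpick
  -- the recursively defined list of bounds
  let L : ℕ → List ℕ := fun k => Nat.rec [] (fun _ lk => lk ++ [pick lk]) k
  have hLsucc : ∀ k, L (k + 1) = L k ++ [pick (L k)] := fun k => rfl
  have hLlen : ∀ k, (L k).length = k := by
    intro k; induction k with
    | zero => rfl
    | succ k ih => rw [hLsucc, List.length_append, ih]; rfl
  set s : ℕ → ℕ := fun i => pick (L i) with hs
  have hLgetD : ∀ k, ∀ i < k, (L k).getD i 0 = s i := by
    intro k
    induction k with
    | zero => intro i hi; omega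
    | succ k ih =>
      intro i hi
      rw [hLsucc]
      rcases lt_or_ge i k with hik | hik
      · rw [List.getD_append _ _ 0 i (by rw [hLlen]; exact hik)]
        exact ih i hik
      · have : i = k := by omega
        subst this
        rw [List.getD_append_right _ _ 0 i (by rw [hLlen]), hLlen, Nat.sub_self]
        rfl
  -- identify bddSeqs (L k) with the set bounded by s
  have hbdd : ∀ k, bddSeqs (L k) = {σ : ℕ → ℕ | ∀ i < k, σ i ≤ s i} := by
    intro k
    ext σ
    simp only [bddSeqs, mem_setOf_eq, hLlen]
    exact forall₂_congr fun i hi => by rw [hLgetD k i hi]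
  -- the invariant
  have hsumle : ∀ k : ℕ, (∑ i ∈ Finset.range k, (2⁻¹ : ℝ≥0∞) ^ (i + 1)) ≤ 1 := by
    have key : ∀ k : ℕ, (∑ i ∈ Finset.range k, (2⁻¹ : ℝ≥0∞) ^ (i + 1)) + 2⁻¹ ^ k = 1 := by
      intro k
      induction k with
      | zero => simp
      | succ k ih =>
        rw [Finset.sum_range_succ, add_assoc]
        have : (2⁻¹ : ℝ≥0∞) ^ (k + 1) + 2⁻¹ ^ (k + 1) = 2⁻¹ ^ k := by
          rw [← two_mul, pow_succ, mul_comm ((2⁻¹: ℝ≥0∞) ^ k) 2⁻¹, ← mul_assoc]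
          rw [ENNReal.mul_inv_cancel (by norm_num) (by norm_num), one_mul]
        rw [this, ih]
    intro k
    calc (∑ i ∈ Finset.range k, (2⁻¹ : ℝ≥0∞) ^ (i + 1))
          ≤ (∑ i ∈ Finset.range k, (2⁻¹ : ℝ≥0∞) ^ (i + 1)) + 2⁻¹ ^ k := le_self_add
        _ = 1 := key k
  -- invariant: the measure loss is controlled
  have hinv : ∀ k : ℕ, ν (range f) ≤ ν (f '' bddSeqs (L k))
      + ε * ∑ i ∈ Finset.range k, (2⁻¹ : ℝ≥0∞) ^ (i + 1) := by
    intro k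
    induction k with
    | zero =>
      have h0 : L 0 = [] := rfl
      rw [h0, bddSeqs_nil, image_univ]
      simp
    | succ k ih =>
      refine ih.trans ?_
      have hp := hpickspec (L k)
      rw [hLlen k] at hp
      rw [← hLsucc k] at hp
      calc ν (f '' bddSeqs (L k)) + ε * ∑ i ∈ Finset.range k, (2⁻¹ : ℝ≥0∞) ^ (i + 1)
          ≤ (ν (f '' bddSeqs (L (k+1))) + ε * 2⁻¹ ^ (k + 1))
            + ε * ∑ i ∈ Finset.range k, (2⁻¹ : ℝ≥0∞) ^ (i + 1) := add_le_add_left hp _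
        _ = ν (f '' bddSeqs (L (k+1)))
            + ε * ∑ i ∈ Finset.range (k+1), (2⁻¹ : ℝ≥0∞) ^ (i + 1) := by
            rw [Finset.sum_range_succ, mul_add, add_assoc, add_comm (ε * 2⁻¹ ^ (k+1))]
  have hinv' : ∀ k : ℕ, ν (range f) ≤ ν (f '' bddSeqs (L k)) + ε := by
    intro k
    refine (hinv k).trans (add_le_add_right ?_ _)
    calc ε * ∑ i ∈ Finset.range k, (2⁻¹ : ℝ≥0∞) ^ (i + 1) ≤ ε * 1 :=
          mul_le_mul_right (hsumle k) ε
      _ = ε := mul_one ε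
  -- the compact set
  set K : Set (ℕ → ℕ) := {σ | ∀ i, σ i ≤ s i} with hK
  have hKcomp : IsCompact K := by
    have : K = Set.pi univ (fun i => Iic (s i)) := by
      ext σ; simp [hK, Set.pi]
    rw [this]
    exact isCompact_univ_pi fun i => (finite_Iic (s i)).isCompact
  refine ⟨f '' K, hKcomp.image hf, image_subset_range f K, ?_⟩
  -- the decreasing closures
  have hmono : Antitone fun k => f '' bddSeqs (L k) := by
    intro a b hab
    refine image_mono ?_
    rw [hbdd a, hbdd b]
    exact fun σ hσ i hi => hσ i (lt_of_lt_of_le hi hab)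
  have hsub : (⋂ k, closure (f '' bddSeqs (L k))) ⊆ f '' K := by
    intro z hz
    simp only [mem_iInter] at hz
    -- pick an antitone basis of neighborhoods of z
    obtain ⟨V, hV⟩ := (𝓝 z).exists_antitone_basis
    -- pick approximating sequences
    have hτ : ∀ k : ℕ, ∃ σ, σ ∈ bddSeqs (L (k+1)) ∧ f σ ∈ V k := by
      intro k
      have hzc := hz (k + 1)
      rw [mem_closure_iff_nhds] at hzc
      obtain ⟨y, hy1, hy2⟩ := hzc (V k) (hV.1.mem_of_mem trivial)
      obtain ⟨σ, hσ, rfl⟩ := hy2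
      exact ⟨σ, hσ, hy1⟩
    choose τ hτb hτV using hτ
    -- all τ's live in a compact product set
    set W : Set (ℕ → ℕ) :=
      {σ | ∀ i, σ i ≤ max (s i) ((Finset.range (i+1)).sup fun j => τ j i)} with hW
    have hWcomp : IsCompact W := by
      have : W = Set.pi univ
          (fun i => Iic (max (s i) ((Finset.range (i+1)).sup fun j => τ j i))) := by
        ext σ; simp [hW, Set.pi]
      rw [this]
      exact isCompact_univ_pi fun i => (finite_Iic _).isCompact
    have hτW : ∀ k, τ k ∈ W := by
      intro k i
      rcases le_or_gt k i with hki | hik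
      · exact le_max_of_le_right
          (Finset.le_sup (f := fun j => τ j i) (Finset.mem_range.mpr (by omega)))
      · have := hτb k
        rw [hbdd (k+1)] at this
        exact le_max_of_le_left (this i (by omega))
    -- cluster point
    have hle : Filter.map τ atTop ≤ 𝓟 W := by
      rw [Filter.le_principal_iff]
      exact Filter.mem_map.mpr (Filter.Eventually.of_forall hτW)
    obtain ⟨σ, hσW, hσcl⟩ := hWcomp hle
    -- σ ∈ K
    have hσK : σ ∈ K := by
      intro i
      have hU : {x : ℕ → ℕ | x i = σ i} ∈ 𝓝 σ := by
        have hopen : IsOpen ((fun x : ℕ → ℕ => x i) ⁻¹' {σ i}) :=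
          (isOpen_discrete ({σ i} : Set ℕ)).preimage (continuous_apply i)
        exact hopen.mem_nhds rfl
      have hfreq : ∃ᶠ k in atTop, τ k ∈ {x : ℕ → ℕ | x i = σ i} :=
        (mapClusterPt_iff_frequently.mp hσcl) _ hU
      obtain ⟨k, hki, hkeq⟩ := (hfreq.and_eventually (eventually_ge_atTop i)).exists
      have := hτb k
      rw [hbdd (k+1)] at this
      rw [← hki]
      exact this i (by omega)
    -- f σ = z
    have hfz : f σ = z := by
      have htend : Tendsto (fun k => f (τ k)) atTop (𝓝 z) := hV.tendsto hτV
      have hclf : ClusterPt (f σ) (Filter.map (fun k => f (τ k)) atTop) := by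
        have := (hσcl : ClusterPt σ (Filter.map τ atTop)).map hf.continuousAt
          (le_of_eq (Filter.map_map).symm : Tendsto f (Filter.map τ atTop)
            (Filter.map (fun k => f (τ k)) atTop))
        exact this
      have hne : (𝓝 (f σ) ⊓ 𝓝 z).NeBot := hclf.mono htend
      exact t2_iff_nhds.mp inferInstance hne
    exact ⟨σ, hσK, hfz⟩
  -- conclude with measures
  have hclosed : ∀ k, IsClosed (closure (f '' bddSeqs (L k))) := fun k => isClosed_closure
  have htendsto : Tendsto (fun k => ν (closure (f '' bddSeqs (L k)))) atTop
      (𝓝 (ν (⋂ k, closure (f '' bddSeqs (L k))))) := by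
    have := tendsto_measure_iInter_atTop (μ := ν)
      (fun k => ((hclosed k).measurableSet).nullMeasurableSet)
      (fun a b hab => closure_mono (hmono hab)) ⟨0, measure_ne_top _ _⟩
    exact this
  have hbound : ∀ k, ν (range f) ≤ ν (closure (f '' bddSeqs (L k))) + ε := fun k =>
    (hinv' k).trans (add_le_add_left (measure_mono subset_closure) ε)
  have : ν (range f) ≤ ν (⋂ k, closure (f '' bddSeqs (L k))) + ε :=
    ge_of_tendsto' (htendsto.add_const ε) hbound
  exact this.trans (add_le_add_left (measure_mono hsub) ε)

theorem analyticSet_nullMeasurableSet {A : Set Z} (hA : MeasureTheory.AnalyticSet A)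
    (ν : Measure Z) [IsFiniteMeasure ν] : NullMeasurableSet A ν := by
  rw [MeasureTheory.AnalyticSet] at hA
  rcases hA with rfl | ⟨f, hfc, rfl⟩
  · exact MeasurableSet.empty.nullMeasurableSet
  have key : ∀ n : ℕ, ∃ C : Set Z, IsCompact C ∧ C ⊆ range f ∧
      ν (range f) ≤ ν C + ((n : ℝ≥0∞) + 1)⁻¹ := by
    intro n
    exact exists_compact_subset_of_analytic_aux f hfc ν
      (by simp) (by simp [ENNReal.inv_ne_top])
  choose C hCcomp hCsub hCle using key
  set B : Set Z := ⋃ n, C n with hB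
  have hBmeas : MeasurableSet B :=
    MeasurableSet.iUnion fun n => ((hCcomp n).isClosed).measurableSet
  have hBsub : B ⊆ range f := iUnion_subset hCsub
  have hlim : Tendsto (fun n : ℕ => ν B + ((n : ℝ≥0∞) + 1)⁻¹) atTop (𝓝 (ν B)) := by
    have h1 : Tendsto (fun n : ℕ => ((n : ℝ≥0∞) + 1)⁻¹) atTop (𝓝 0) := by
      have h2 := ENNReal.tendsto_inv_nat_nhds_zero.comp (tendsto_add_atTop_nat 1)
      simpa [Function.comp_def] using h2
    simpa using tendsto_const_nhds.add h1
  have hle : ν (range f) ≤ ν B := by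
    refine ge_of_tendsto' hlim fun n => ?_
    exact (hCle n).trans (add_le_add_left (measure_mono (subset_iUnion C n)) _)
  -- now conclude null-measurability
  have hMsub : range f ⊆ toMeasurable ν (range f) := subset_toMeasurable ν _
  have hdiff : ν (toMeasurable ν (range f) \ B) = 0 := by
    have h1 : ν (toMeasurable ν (range f) \ B) =
        ν (toMeasurable ν (range f)) - ν B := by
      refine measure_diff (hBsub.trans hMsub) hBmeas.nullMeasurableSet (measure_ne_top _ _)
    rw [h1, measure_toMeasurable]
    exact tsub_eq_zero_of_le hle
  refine ⟨B, hBmeas, ?_⟩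
  rw [Filter.eventuallyEq_set]
  have : ∀ᵐ x ∂ν, x ∉ toMeasurable ν (range f) \ B := by
    rw [MeasureTheory.ae_iff]
    simp only [not_not]; exact hdiff
  filter_upwards [this] with x hx
  constructor
  · intro hxA
    by_contra hxB
    exact hx ⟨hMsub hxA, hxB⟩
  · intro hxB
    exact hBsub hxB

/-! ### Parametrizing probability measures on `ℝ` by rational CDFs -/

/-- The probability measure on `ℝ` associated to an arbitrary function `ℚ → ℝ`,
via the (completed) Stieltjes function machinery. This map is measurable and surjective
onto probability measures on `ℝ`. -/
noncomputable def Tmeas (q : ℚ → ℝ) : Measure ℝ :=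
  (ProbabilityTheory.stieltjesOfMeasurableRat id measurable_id q).measure

instance Tmeas_prob (q : ℚ → ℝ) : IsProbabilityMeasure (Tmeas q) :=
  ProbabilityTheory.instIsProbabilityMeasure_stieltjesOfMeasurableRat measurable_id q

lemma measurable_Tmeas : Measurable Tmeas :=
  ProbabilityTheory.measurable_measure_stieltjesOfMeasurableRat measurable_id

/-- infimum over rationals greater than `x` of a monotone right-continuous function. -/
lemma iInf_rat_gt_eq_of_right_continuous {F : ℝ → ℝ} (hF : Monotone F) {x : ℝ}
    (hc : ContinuousWithinAt F (Ici x) x) :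
    ⨅ r : {q : ℚ // x < (q : ℝ)}, F r = F x := by
  obtain ⟨r0, hr0⟩ := exists_rat_gt x
  have hne : Nonempty {q : ℚ // x < (q : ℝ)} := ⟨⟨r0, hr0⟩⟩
  have hbdd : BddBelow (range fun r : {q : ℚ // x < (q : ℝ)} => F r) := by
    refine ⟨F x, ?_⟩
    rintro y ⟨r, rfl⟩
    exact hF r.2.le
  refine le_antisymm ?_ (le_ciInf fun r => hF r.2.le)
  -- build a rational sequence decreasing to x
  have hseq : ∀ n : ℕ, ∃ r : ℚ, x < (r : ℝ) ∧ (r : ℝ) < x + 1 / (n + 1) := by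
    intro n
    obtain ⟨r, hr1, hr2⟩ := exists_rat_btwn (lt_add_of_pos_right x
      (by positivity : (0:ℝ) < 1 / (n + 1)))
    exact ⟨r, hr1, hr2⟩
  choose r hr1 hr2 using hseq
  have htend : Tendsto (fun n : ℕ => ((r n : ℝ))) atTop (𝓝 x) := by
    have hupper : Tendsto (fun n : ℕ => x + 1 / (n + 1 : ℝ)) atTop (𝓝 x) := by
      have := tendsto_one_div_add_atTop_nhds_zero_nat (𝕜 := ℝ)
      simpa using tendsto_const_nhds.add this
    exact tendsto_of_tendsto_of_tendsto_of_le_of_le tendsto_const_nhds hupper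
      (fun n => (hr1 n).le) (fun n => (hr2 n).le)
  have htendW : Tendsto (fun n : ℕ => ((r n : ℝ))) atTop (𝓝[Ici x] x) := by
    rw [tendsto_nhdsWithin_iff]
    exact ⟨htend, Filter.Eventually.of_forall fun n => (hr1 n).le⟩
  have hFtend : Tendsto (fun n : ℕ => F (r n)) atTop (𝓝 (F x)) := hc.tendsto.comp htendW
  exact ge_of_tendsto hFtend
    (Filter.Eventually.of_forall fun n => ciInf_le hbdd ⟨r n, hr1 n⟩)

/-- Every probability measure on `ℝ` is `Tmeas q` for some `q`. -/
lemma Tmeas_surjective (ρ : Measure ℝ) [IsProbabilityMeasure ρ] : ∃ q, Tmeas q = ρ := by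
  classical
  set F := ProbabilityTheory.cdf ρ with hFdef
  have hrc : ∀ x : ℝ, ⨅ r : {q' : ℚ // x < (q' : ℝ)}, F r = F x := fun x =>
    iInf_rat_gt_eq_of_right_continuous F.mono (F.right_continuous x)
  set q : ℚ → ℝ := fun r => F r with hq
  have hpt : ProbabilityTheory.IsRatStieltjesPoint id q := by
    constructor
    · exact fun a b hab => F.mono (by exact_mod_cast hab)
    · have hcast : Tendsto (fun r : ℚ => (r : ℝ)) atTop atTop :=
        tendsto_ratCast_atTop_iff.mpr tendsto_id
      exact (ProbabilityTheory.tendsto_cdf_atTop ρ).comp hcast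
    · have hcast : Tendsto (fun r : ℚ => (r : ℝ)) atBot atBot :=
        tendsto_ratCast_atBot_iff.mpr tendsto_id
      exact (ProbabilityTheory.tendsto_cdf_atBot ρ).comp hcast
    · intro t
      have : (⨅ r : Ioi t, q r) = ⨅ r : {q' : ℚ // (t : ℝ) < (q' : ℝ)}, F r := by
        refine Equiv.iInf_congr
          { toFun := fun r => ⟨r.1, by exact_mod_cast r.2⟩
            invFun := fun r => ⟨r.1, by exact_mod_cast r.2⟩
            left_inv := fun r => by simp only [Subtype.coe_eta]
            right_inv := fun r => by simp only [Subtype.coe_eta] } (fun r => rfl)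
      rw [show (id q : ℚ → ℝ) = q from rfl, this, hrc (t : ℝ)]
  have hSF : ∀ x : ℝ, ProbabilityTheory.stieltjesOfMeasurableRat id measurable_id q x = F x := by
    intro x
    have h1 : ProbabilityTheory.stieltjesOfMeasurableRat id measurable_id q x
        = ProbabilityTheory.IsMeasurableRatCDF.stieltjesFunctionAux
            (ProbabilityTheory.toRatCDF (id : (ℚ → ℝ) → ℚ → ℝ)) q x := rfl
    rw [h1, ProbabilityTheory.IsMeasurableRatCDF.stieltjesFunctionAux_def]
    have h2 : ∀ r : {r' : ℚ // x < (r' : ℝ)},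
        ProbabilityTheory.toRatCDF (id : (ℚ → ℝ) → ℚ → ℝ) q r = F r := fun r =>
      ProbabilityTheory.toRatCDF_of_isRatStieltjesPoint hpt r
    rw [iInf_congr h2]
    exact hrc x
  refine ⟨q, ?_⟩
  refine Measure.ext_of_Iic (Tmeas q) ρ fun x => ?_
  have h3 : Tmeas q (Iic x)
      = ENNReal.ofReal (ProbabilityTheory.stieltjesOfMeasurableRat id measurable_id q x) :=
    ProbabilityTheory.measure_stieltjesOfMeasurableRat_Iic measurable_id q x
  rw [h3, hSF x, ProbabilityTheory.ofReal_cdf]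

/-! ### measures determined by countably many conditions through an embedding into `ℝ` -/

lemma measure_eq_of_embedding_rat {W : Type*} [MeasurableSpace W] {e : W → ℝ}
    (he : MeasurableEmbedding e) (μ ν : Measure W)
    [IsProbabilityMeasure μ] [IsProbabilityMeasure ν]
    (h : ∀ r : ℚ, μ (e ⁻¹' Iio (r : ℝ)) = ν (e ⁻¹' Iio (r : ℝ))) : μ = ν := by
  have hb : (inferInstance : MeasurableSpace ℝ)
      = MeasurableSpace.generateFrom (⋃ r : ℚ, {Iio (r : ℝ)}) := by
    rw [BorelSpace.measurable_eq (α := ℝ)]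
    exact Real.borel_eq_generateFrom_Iio_rat
  have h1 : (inferInstance : MeasurableSpace W)
      = MeasurableSpace.comap e (inferInstance : MeasurableSpace ℝ) := by
    refine le_antisymm ?_ he.measurable.comap_le
    intro S hS
    exact ⟨e '' S, he.measurableSet_image.mpr hS, preimage_image_eq S he.injective⟩
  have hgen : (inferInstance : MeasurableSpace W)
      = MeasurableSpace.generateFrom ((fun s => e ⁻¹' s) '' (⋃ r : ℚ, {Iio (r : ℝ)})) := by
    rw [h1, hb, MeasurableSpace.comap_generateFrom]
  have hpi : IsPiSystem ((fun s => e ⁻¹' s) '' (⋃ r : ℚ, {Iio (r : ℝ)})) := by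
    rintro _ ⟨s, hs, rfl⟩ _ ⟨t, ht, rfl⟩ _
    simp only [mem_iUnion, mem_singleton_iff] at hs ht
    obtain ⟨r, rfl⟩ := hs
    obtain ⟨r', rfl⟩ := ht
    refine ⟨Iio ((min r r' : ℚ) : ℝ), ?_, ?_⟩
    · exact mem_iUnion.mpr ⟨min r r', rfl⟩
    · rw [← preimage_inter, Iio_inter_Iio]
      norm_cast
  refine ext_of_generate_finite _ hgen hpi ?_ (by simp)
  rintro _ ⟨s, hs, rfl⟩
  simp only [mem_iUnion, mem_singleton_iff] at hs
  obtain ⟨r, rfl⟩ := hs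
  exact h r

end OTProofAux

namespace OTProofAux

open ProbabilityTheory in
theorem aemeasurable_otCost {Z X : Type*} [MeasurableSpace Z] [StandardBorelSpace Z]
    [MeasurableSpace X] [StandardBorelSpace X] [Nonempty X]
    {c : X → X → ℝ≥0∞} (hc : Measurable fun p : X × X => c p.1 p.2)
    {μ ν : Z → Measure X} (hμ : Measurable μ) (hν : Measurable ν)
    (hμp : ∀ z, IsProbabilityMeasure (μ z)) (hνp : ∀ z, IsProbabilityMeasure (ν z))
    (P : Measure Z) [IsFiniteMeasure P] :
    AEMeasurable (fun z => otCost c (μ z) (ν z)) P := by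
  classical
  letI := upgradeStandardBorel Z
  obtain ⟨j, hj⟩ := exists_measurableEmbedding_real (X × X)
  obtain ⟨eX, heX⟩ := exists_measurableEmbedding_real X
  set ginv : ℝ → X × X := Function.extend j id fun _ => Classical.arbitrary (X × X)
    with hginvdef
  have hginv : Measurable ginv := hj.measurable_extend measurable_id measurable_const
  have hginvj : ∀ p : X × X, ginv (j p) = p := fun p => by
    rw [hginvdef]
    exact hj.injective.extend_apply _ _ p
  set c' : ℝ → ℝ≥0∞ := fun t => c (ginv t).1 (ginv t).2 with hc'def
  have hc' : Measurable c' := hc.comp hginv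
  have hcj : ∀ p : X × X, c' (j p) = c p.1 p.2 := fun p => by
    rw [hc'def]
    simp only [hginvj p]
  -- cost integral is measurable in the parameter
  set κT : Kernel (ℚ → ℝ) ℝ := ⟨Tmeas, measurable_Tmeas⟩ with hκT
  haveI : IsMarkovKernel κT := ⟨fun q => Tmeas_prob q⟩
  have hcost : Measurable fun q : ℚ → ℝ => ∫⁻ t, c' t ∂(Tmeas q) := by
    have h := Measurable.lintegral_kernel_prod_right (κ := κT)
      (f := fun (_ : ℚ → ℝ) t => c' t) (hc'.comp measurable_snd)
    exact h
  have hS : ∀ r : ℚ, MeasurableSet (eX ⁻¹' Iio (r : ℝ)) :=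
    fun r => heX.measurable measurableSet_Iio
  -- sub-level sets are analytic
  have hana : ∀ a : ℝ≥0∞, MeasureTheory.AnalyticSet {z | otCost c (μ z) (ν z) < a} := by
    intro a
    set D : Set (Z × (ℚ → ℝ)) :=
      {p | ∀ r : ℚ, Tmeas p.2 (j '' (Prod.fst ⁻¹' (eX ⁻¹' Iio (r : ℝ))))
            = μ p.1 (eX ⁻¹' Iio (r : ℝ))} ∩
      ({p | ∀ r : ℚ, Tmeas p.2 (j '' (Prod.snd ⁻¹' (eX ⁻¹' Iio (r : ℝ))))
            = ν p.1 (eX ⁻¹' Iio (r : ℝ))} ∩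
      ({p | Tmeas p.2 (range j) = 1} ∩
       {p | ∫⁻ t, c' t ∂(Tmeas p.2) < a})) with hD
    have hTm : Measurable fun p : Z × (ℚ → ℝ) => Tmeas p.2 :=
      measurable_Tmeas.comp measurable_snd
    have heqset : ∀ {f g : Z × (ℚ → ℝ) → ℝ≥0∞}, Measurable f → Measurable g →
        MeasurableSet {p | f p = g p} := by
      intro f g hf hg
      have hh : {p | f p = g p} = {p | f p ≤ g p} ∩ {p | g p ≤ f p} := by
        ext p
        simp only [mem_setOf_eq, mem_inter_iff]
        exact le_antisymm_iff
      rw [hh]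
      exact (measurableSet_le hf hg).inter (measurableSet_le hg hf)
    have hDmeas : MeasurableSet D := by
      refine MeasurableSet.inter ?_ (MeasurableSet.inter ?_ (MeasurableSet.inter ?_ ?_))
      · have : {p : Z × (ℚ → ℝ) | ∀ r : ℚ, Tmeas p.2 (j '' (Prod.fst ⁻¹' (eX ⁻¹' Iio (r : ℝ))))
            = μ p.1 (eX ⁻¹' Iio (r : ℝ))} = ⋂ r : ℚ,
            {p | Tmeas p.2 (j '' (Prod.fst ⁻¹' (eX ⁻¹' Iio (r : ℝ))))
              = μ p.1 (eX ⁻¹' Iio (r : ℝ))} := by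
          ext p; simp only [mem_setOf_eq, mem_iInter]
        rw [this]
        refine MeasurableSet.iInter fun r => heqset ?_ ?_
        · exact (Measure.measurable_coe (hj.measurableSet_image.mpr
            ((hS r).preimage measurable_fst))).comp hTm
        · exact (Measure.measurable_coe (hS r)).comp (hμ.comp measurable_fst)
      · have : {p : Z × (ℚ → ℝ) | ∀ r : ℚ, Tmeas p.2 (j '' (Prod.snd ⁻¹' (eX ⁻¹' Iio (r : ℝ))))
            = ν p.1 (eX ⁻¹' Iio (r : ℝ))} = ⋂ r : ℚ,
            {p | Tmeas p.2 (j '' (Prod.snd ⁻¹' (eX ⁻¹' Iio (r : ℝ))))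
              = ν p.1 (eX ⁻¹' Iio (r : ℝ))} := by
          ext p; simp only [mem_setOf_eq, mem_iInter]
        rw [this]
        refine MeasurableSet.iInter fun r => heqset ?_ ?_
        · exact (Measure.measurable_coe (hj.measurableSet_image.mpr
            ((hS r).preimage measurable_snd))).comp hTm
        · exact (Measure.measurable_coe (hS r)).comp (hν.comp measurable_fst)
      · exact heqset ((Measure.measurable_coe hj.measurableSet_range).comp hTm)
          measurable_const
      · exact (hcost.comp measurable_snd) measurableSet_Iio
    have hDeq : {z | otCost c (μ z) (ν z) < a} = Prod.fst '' D := by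
      ext z
      simp only [mem_setOf_eq, mem_image]
      constructor
      · intro hz
        simp only [otCost, iInf_lt_iff, mem_setOf_eq] at hz
        obtain ⟨π, ⟨hm1, hm2⟩, hlt⟩ := hz
        haveI : IsProbabilityMeasure π := by
          constructor
          have h1 : π.map Prod.fst Set.univ = μ z Set.univ := by rw [hm1]
          rw [Measure.map_apply measurable_fst MeasurableSet.univ, preimage_univ] at h1
          rw [h1]
          exact measure_univ
        haveI : IsProbabilityMeasure (π.map j) :=
          Measure.isProbabilityMeasure_map hj.measurable.aemeasurable
        obtain ⟨q, hq⟩ := Tmeas_surjective (π.map j)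
        refine ⟨(z, q), ⟨?_, ?_, ?_, ?_⟩, rfl⟩
        · intro r
          show Tmeas q (j '' (Prod.fst ⁻¹' (eX ⁻¹' Iio (r : ℝ)))) = μ z (eX ⁻¹' Iio (r : ℝ))
          rw [hq, Measure.map_apply hj.measurable
            (hj.measurableSet_image.mpr ((hS r).preimage measurable_fst)),
            preimage_image_eq _ hj.injective,
            ← Measure.map_apply measurable_fst (hS r), hm1]
        · intro r
          show Tmeas q (j '' (Prod.snd ⁻¹' (eX ⁻¹' Iio (r : ℝ)))) = ν z (eX ⁻¹' Iio (r : ℝ))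
          rw [hq, Measure.map_apply hj.measurable
            (hj.measurableSet_image.mpr ((hS r).preimage measurable_snd)),
            preimage_image_eq _ hj.injective,
            ← Measure.map_apply measurable_snd (hS r), hm2]
        · show Tmeas q (range j) = 1
          rw [hq, Measure.map_apply hj.measurable hj.measurableSet_range, preimage_range]
          exact measure_univ
        · show ∫⁻ t, c' t ∂(Tmeas q) < a
          rw [hq, lintegral_map hc' hj.measurable]
          have hre : (fun p : X × X => c' (j p)) = fun p => c p.1 p.2 := funext hcj
          rw [hre]
          exact hlt
      · rintro ⟨⟨z', q⟩, hmem, rfl⟩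
        obtain ⟨h1, h2, h3, h4⟩ := hmem
        simp only [mem_setOf_eq] at h1 h2 h3 h4
        have hrc : Tmeas q (range j)ᶜ = 0 := by
          rw [measure_compl hj.measurableSet_range (measure_ne_top _ _), h3, measure_univ,
            tsub_self]
        set π : Measure (X × X) := (Tmeas q).map ginv with hπ
        haveI : IsProbabilityMeasure π := Measure.isProbabilityMeasure_map hginv.aemeasurable
        have hkey : ∀ S : Set (X × X), MeasurableSet S → π S = Tmeas q (j '' S) := by
          intro S hSm
          rw [hπ, Measure.map_apply hginv hSm]
          have h5 : ginv ⁻¹' S ∩ range j = j '' S := by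
            ext y
            constructor
            · rintro ⟨hy1, p, rfl⟩
              refine ⟨p, ?_, rfl⟩
              rwa [mem_preimage, hginvj p] at hy1
            · rintro ⟨p, hp, rfl⟩
              refine ⟨?_, ⟨p, rfl⟩⟩
              rw [mem_preimage, hginvj p]
              exact hp
          rw [← h5]
          exact (measure_inter_conull' (measure_mono_null (fun y hy => hy.2) hrc)).symm
        haveI : IsProbabilityMeasure (π.map Prod.fst) :=
          Measure.isProbabilityMeasure_map measurable_fst.aemeasurable
        haveI : IsProbabilityMeasure (π.map Prod.snd) :=
          Measure.isProbabilityMeasure_map measurable_snd.aemeasurable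
        have hmf : π.map Prod.fst = μ z' := by
          refine measure_eq_of_embedding_rat heX _ _ fun r => ?_
          rw [Measure.map_apply measurable_fst (hS r),
            hkey _ ((hS r).preimage measurable_fst)]
          exact h1 r
        have hms : π.map Prod.snd = ν z' := by
          refine measure_eq_of_embedding_rat heX _ _ fun r => ?_
          rw [Measure.map_apply measurable_snd (hS r),
            hkey _ ((hS r).preimage measurable_snd)]
          exact h2 r
        have hle : otCost c (μ z') (ν z') ≤ ∫⁻ p, c p.1 p.2 ∂π :=
          iInf₂_le π ⟨hmf, hms⟩
        have hcalc : ∫⁻ p, c p.1 p.2 ∂π = ∫⁻ t, c' t ∂(Tmeas q) := by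
          rw [hπ, lintegral_map hc hginv]
        exact lt_of_le_of_lt (hle.trans_eq hcalc) h4
    rw [hDeq]
    exact hDmeas.analyticSet_image measurable_fst
  -- null measurability and conclusion
  have hnull : ∀ a : ℝ≥0∞, NullMeasurableSet {z | otCost c (μ z) (ν z) < a} P := fun a =>
    analyticSet_nullMeasurableSet (hana a) P
  have hNM : NullMeasurable (fun z => otCost c (μ z) (ν z)) P := by
    have hmble : @Measurable (NullMeasurableSpace Z P) ℝ≥0∞ inferInstance inferInstance
        (fun z => otCost c (μ z) (ν z)) := by
      refine measurable_of_Iio fun a => ?_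
      exact hnull a
    exact fun s hs => hmble hs
  exact hNM.aemeasurable

end OTProofAux

end OTAuxSection

/-- upper bound of Proposition 1: if `W_{c_X}` satisfies the triangle inequality,
then the conditional OT cost `R_Y(Ḡ_X; Φ_Y)` is bounded above by
`R_Z(Ḡ_X; Φ_Y) + E(Φ_Y)`, where `E(Φ_Y) = ∫ W_{c_X}(P_{X|Y=y}, P_{X|Z=Φ_Y(y)}) P_Y(dy)`
is the conditional representation error. -/
theorem conditional_otCost_le_latent_plus_representation_error
    {Y X Z U : Type*}
    [MeasurableSpace Y] [StandardBorelSpace Y]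
    [MeasurableSpace X] [TopologicalSpace X] [PolishSpace X] [BorelSpace X]
    [MeasurableSpace Z] [StandardBorelSpace Z]
    [MeasurableSpace U] [StandardBorelSpace U]
    (cX : X → X → ℝ≥0∞) (hcX : LowerSemicontinuous fun p : X × X => cX p.1 p.2)
    (htri : ∀ μ ν ξ : Measure X, IsProbabilityMeasure μ → IsProbabilityMeasure ν →
      IsProbabilityMeasure ξ → otCost cX μ ξ ≤ otCost cX μ ν + otCost cX ν ξ)
    (PYX : Measure (Y × X)) [IsProbabilityMeasure PYX]
    (PY : Measure Y) [IsProbabilityMeasure PY] (hPY : PYX.map Prod.fst = PY)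
    (κY : Kernel Y X) [IsMarkovKernel κY] (hdisY : PYX = PY.compProd κY)
    (ΦY : Y → Z) (hΦY : Measurable ΦY)
    (PZ : Measure Z) [IsProbabilityMeasure PZ] (hPZ : PY.map ΦY = PZ)
    (PZX : Measure (Z × X)) [IsProbabilityMeasure PZX]
    (hPZX : PYX.map (fun p : Y × X => (ΦY p.1, p.2)) = PZX)
    (κZ : Kernel Z X) [IsMarkovKernel κZ] (hdisZ : PZX = PZ.compProd κZ)
    (PU : Measure U) [IsProbabilityMeasure PU]
    (GbarX : Z × U → X) (hGbarX : Measurable GbarX) :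
    ∫⁻ y, otCost cX (κY y) (PU.map (fun u => GbarX (ΦY y, u))) ∂PY
      ≤ (∫⁻ z, otCost cX (κZ z) (PU.map (fun u => GbarX (z, u))) ∂PZ)
        + ∫⁻ y, otCost cX (κY y) (κZ (ΦY y)) ∂PY := by
  classical
  -- `X` is nonempty since a probability measure on `Z × X` exists
  cases isEmpty_or_nonempty X with
  | inl hXe =>
    exfalso
    haveI : IsEmpty (Z × X) := ⟨fun p => hXe.false p.2⟩
    have h1 : PZX Set.univ = 1 := measure_univ
    rw [Set.univ_eq_empty_iff.mpr inferInstance] at h1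
    simp at h1
  | inr hXne =>
  set h : Z → ℝ≥0∞ := fun z => otCost cX (κZ z) (PU.map fun u => GbarX (z, u)) with hh
  haveI hprobν : ∀ z, IsProbabilityMeasure (PU.map fun u => GbarX (z, u)) := fun z =>
    Measure.isProbabilityMeasure_map (hGbarX.comp measurable_prodMk_left).aemeasurable
  have hνmeas : Measurable fun z => PU.map fun u => GbarX (z, u) := by
    refine Measure.measurable_of_measurable_coe _ fun S hSm => ?_
    have h1 : (fun z => (PU.map fun u => GbarX (z, u)) S)
        = fun z => PU (Prod.mk z ⁻¹' (GbarX ⁻¹' S)) := by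
      funext z
      rw [Measure.map_apply
        (show Measurable fun u => GbarX (z, u) from hGbarX.comp measurable_prodMk_left) hSm]
      rfl
    rw [h1]
    exact measurable_measure_prodMk_left (hGbarX hSm)
  have hcmeas : Measurable fun p : X × X => cX p.1 p.2 := hcX.measurable
  have hae : AEMeasurable h PZ :=
    OTProofAux.aemeasurable_otCost hcmeas (Kernel.measurable κZ) hνmeas
      (fun z => inferInstance) hprobν PZ
  obtain ⟨h₀, hh₀meas, hh₀eq⟩ := hae
  have hcomp : ∀ᵐ y ∂PY, h (ΦY y) = h₀ (ΦY y) := by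
    have := hh₀eq
    rw [← hPZ] at this
    exact ae_of_ae_map hΦY.aemeasurable this
  have htriangle : ∀ y, otCost cX (κY y) (PU.map fun u => GbarX (ΦY y, u))
      ≤ otCost cX (κY y) (κZ (ΦY y)) + h (ΦY y) := fun y =>
    htri (κY y) (κZ (ΦY y)) _ inferInstance inferInstance (hprobν (ΦY y))
  calc ∫⁻ y, otCost cX (κY y) (PU.map fun u => GbarX (ΦY y, u)) ∂PY
      ≤ ∫⁻ y, (otCost cX (κY y) (κZ (ΦY y)) + h₀ (ΦY y)) ∂PY := by
        refine lintegral_mono_ae ?_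
        filter_upwards [hcomp] with y hy
        have := htriangle y
        rwa [hy] at this
    _ = (∫⁻ y, otCost cX (κY y) (κZ (ΦY y)) ∂PY) + ∫⁻ y, h₀ (ΦY y) ∂PY :=
        lintegral_add_right _ (hh₀meas.comp hΦY)
    _ = (∫⁻ z, otCost cX (κZ z) (PU.map fun u => GbarX (z, u)) ∂PZ)
        + ∫⁻ y, otCost cX (κY y) (κZ (ΦY y)) ∂PY := by
        have h2 : ∫⁻ y, h₀ (ΦY y) ∂PY = ∫⁻ z, h₀ z ∂PZ := by
          rw [← hPZ, lintegral_map hh₀meas hΦY]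
        have h3 : ∫⁻ z, h₀ z ∂PZ = ∫⁻ z, h z ∂PZ := lintegral_congr_ae hh₀eq.symm
        rw [h2, h3, add_comm]
end

section
/- Suppose there exist maps G†_Y : Z → Y and G†_X : Y × U → X such that the block-triangular map G†(z,u) = (G†_Y(z), G†_X(G†_Y(z),u)) pushes P_Z ⊗ P_U to P_{Y,X}, and suppose Φ_Y : Y → Z satisfies G†_Y ∘ Φ_Y(y) = y for P_Y-almost every y. Then for P_Y-almost every y, the conditional distribution P_{X|Z=Φ_Y(y)} (with Z = Φ_Y(Y)) equals G†_X(y,·) # P_U = P_{X|Y=y}; in particular the conditional representation error E(Φ_Y) vanishes. -/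
open MeasureTheory ProbabilityTheory
open scoped ENNReal

/-- Kernel `a ↦ (F (a, ·)) # ν`. -/
noncomputable def pushKernel {A U X : Type*} [MeasurableSpace A] [MeasurableSpace U]
    [MeasurableSpace X] (ν : Measure U) [SFinite ν] {F : A × U → X} (hF : Measurable F) :
    Kernel A X where
  toFun a := ν.map (fun u => F (a, u))
  measurable' := by
    refine Measure.measurable_of_measurable_coe _ fun s hs => ?_
    have h : (fun a => (ν.map fun u => F (a, u)) s)
        = fun a => ν (Prod.mk a ⁻¹' (F ⁻¹' s)) := by
      ext a
      rw [Measure.map_apply (show Measurable fun u => F (a, u) from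
        hF.comp measurable_prodMk_left) hs]
      rfl
    exact h ▸ measurable_measure_prodMk_left (hF hs)

lemma pushKernel_apply {A U X : Type*} [MeasurableSpace A] [MeasurableSpace U]
    [MeasurableSpace X] (ν : Measure U) [SFinite ν] {F : A × U → X} (hF : Measurable F) (a : A) :
    pushKernel ν hF a = ν.map (fun u => F (a, u)) := rfl

instance pushKernel_markov {A U X : Type*} [MeasurableSpace A] [MeasurableSpace U]
    [MeasurableSpace X] (ν : Measure U) [IsProbabilityMeasure ν] {F : A × U → X}
    (hF : Measurable F) : IsMarkovKernel (pushKernel ν hF) :=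
  ⟨fun a => by
    rw [pushKernel_apply]
    exact Measure.isProbabilityMeasure_map (hF.comp measurable_prodMk_left).aemeasurable⟩

lemma map_prod_eq_compProd_pushKernel {A U X : Type*} [MeasurableSpace A] [MeasurableSpace U]
    [MeasurableSpace X] (μ : Measure A) [SFinite μ] (ν : Measure U) [IsProbabilityMeasure ν]
    {F : A × U → X} (hF : Measurable F) :
    (μ.prod ν).map (fun p => (p.1, F p)) = μ.compProd (pushKernel ν hF) := by
  ext s hs
  rw [Measure.map_apply (measurable_fst.prodMk hF) hs, Measure.compProd_apply hs,
    Measure.prod_apply ((measurable_fst.prodMk hF) hs)]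
  refine lintegral_congr fun a => ?_
  rw [pushKernel_apply,
    Measure.map_apply (show Measurable fun u => F (a, u) from hF.comp measurable_prodMk_left)
      (measurable_prodMk_left hs)]
  rfl

/-- under Assumptions 1 and 2 (block-triangular generator `G†` pushing
`P_Z ⊗ P_U` to `P_{Y,X}`, and `G†_Y ∘ Φ_Y = id` `P_Y`-a.e.), for `P_Y`-a.e. `y` the
conditional distribution `P_{X|Z=Φ_Y(y)}` equals `G†_X(y,·) # P_U = P_{X|Y=y}`;
in particular the conditional representation error `E(Φ_Y)` vanishes. -/
theorem conditional_representation_error_vanishes_under_assumptions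
    {Z U Y X : Type*}
    [MeasurableSpace Z] [StandardBorelSpace Z]
    [MeasurableSpace U] [StandardBorelSpace U]
    [MeasurableSpace Y] [StandardBorelSpace Y]
    [MeasurableSpace X] [StandardBorelSpace X]
    (cX : X → X → ℝ≥0∞)
    (hrefl : ∀ μ : Measure X, IsProbabilityMeasure μ → otCost cX μ μ = 0)
    (PZ : Measure Z) (PU : Measure U) (PYX : Measure (Y × X))
    [IsProbabilityMeasure PZ] [IsProbabilityMeasure PU] [IsProbabilityMeasure PYX]
    (PY : Measure Y) [IsProbabilityMeasure PY] (hPY : PYX.map Prod.fst = PY)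
    (κY : Kernel Y X) [IsMarkovKernel κY] (hdisY : PYX = PY.compProd κY)
    (GdY : Z → Y) (GdX : Y × U → X) (hGdY : Measurable GdY) (hGdX : Measurable GdX)
    (hpush : (PZ.prod PU).map (fun p : Z × U => (GdY p.1, GdX (GdY p.1, p.2))) = PYX)
    (ΦY : Y → Z) (hΦY : Measurable ΦY)
    (hleft : ∀ᵐ y ∂PY, GdY (ΦY y) = y)
    (PZb : Measure Z) [IsProbabilityMeasure PZb] (hPZb : PY.map ΦY = PZb)
    (PZX : Measure (Z × X)) [IsProbabilityMeasure PZX]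
    (hPZX : PYX.map (fun p : Y × X => (ΦY p.1, p.2)) = PZX)
    (κZ : Kernel Z X) [IsMarkovKernel κZ] (hdisZ : PZX = PZb.compProd κZ) :
    (∀ᵐ y ∂PY, κZ (ΦY y) = PU.map (fun u => GdX (y, u))
        ∧ κY y = PU.map (fun u => GdX (y, u)))
    ∧ ∫⁻ y, otCost cX (κY y) (κZ (ΦY y)) ∂PY = 0 := by
  -- nonemptiness of X (needed for conditional kernels)
  have hne : Nonempty X := by
    obtain ⟨p, -⟩ := nonempty_of_measure_ne_zero (μ := PYX) (s := Set.univ) (by simp)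
    exact ⟨p.2⟩
  -- measurability facts
  have hGdX' : Measurable fun p : Z × U => GdX (GdY p.1, p.2) :=
    hGdX.comp ((hGdY.comp measurable_fst).prodMk measurable_snd)
  have hf1 : Measurable fun p : Z × U => (GdY p.1, GdX (GdY p.1, p.2)) :=
    (hGdY.comp measurable_fst).prodMk hGdX'
  have hg : Measurable fun p : Y × U => (p.1, GdX p) := measurable_fst.prodMk hGdX
  have hg' : Measurable fun p : Z × U => (p.1, GdX (GdY p.1, p.2)) :=
    measurable_fst.prodMk hGdX'
  have hh : Measurable fun p : Y × X => (ΦY p.1, p.2) :=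
    (hΦY.comp measurable_fst).prodMk measurable_snd
  -- the candidate kernels
  set η : Kernel Y X := pushKernel PU hGdX with hη
  set ηZ : Kernel Z X := pushKernel PU hGdX' with hηZ
  -- first marginals
  have hfstY : PYX.fst = PY := by rw [Measure.fst, hPY]
  have hfstZ : PZX.fst = PZb := by rw [hdisZ, Measure.fst_compProd]
  -- PZ.map GdY = PY
  have hmapGdY : PZ.map GdY = PY := by
    have h1 : PY = PZ.map GdY := by
      calc PY = PYX.map Prod.fst := hPY.symm
        _ = ((PZ.prod PU).map (fun p : Z × U => (GdY p.1, GdX (GdY p.1, p.2)))).map Prod.fst := by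
            rw [hpush]
        _ = (PZ.prod PU).map (Prod.fst ∘ fun p : Z × U => (GdY p.1, GdX (GdY p.1, p.2))) :=
            Measure.map_map measurable_fst hf1
        _ = (PZ.prod PU).map (GdY ∘ Prod.fst) := rfl
        _ = ((PZ.prod PU).map Prod.fst).map GdY := (Measure.map_map hGdY measurable_fst).symm
        _ = PZ.map GdY := by rw [← Measure.fst, Measure.fst_prod]
    exact h1.symm
  -- PYX as a pushforward from PY.prod PU
  have hYX : PYX = (PY.prod PU).map (fun p : Y × U => (p.1, GdX p)) := by
    calc PYX = (PZ.prod PU).map (fun p : Z × U => (GdY p.1, GdX (GdY p.1, p.2))) := hpush.symm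
      _ = (PZ.prod PU).map ((fun p : Y × U => (p.1, GdX p)) ∘ Prod.map GdY id) := rfl
      _ = ((PZ.prod PU).map (Prod.map GdY id)).map (fun p : Y × U => (p.1, GdX p)) :=
          (Measure.map_map hg (hGdY.prodMap measurable_id)).symm
      _ = ((PZ.map GdY).prod (PU.map id)).map (fun p : Y × U => (p.1, GdX p)) := by
          rw [Measure.map_prod_map _ _ hGdY measurable_id]
      _ = (PY.prod PU).map (fun p : Y × U => (p.1, GdX p)) := by
          rw [hmapGdY, Measure.map_id]
  -- PYX = PY ⊗ₘ η
  have hYXη : PYX = PY.compProd η := by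
    rw [hYX, hη, map_prod_eq_compProd_pushKernel PY PU hGdX]
  -- a.e. uniqueness for κY and η
  have hκYae : ∀ᵐ y ∂PY, κY y = PYX.condKernel y := by
    have := eq_condKernel_of_measure_eq_compProd κY (ρ := PYX) (by rw [hfstY]; exact hdisY)
    rwa [hfstY] at this
  have hηae : ∀ᵐ y ∂PY, η y = PYX.condKernel y := by
    have := eq_condKernel_of_measure_eq_compProd η (ρ := PYX) (by rw [hfstY]; exact hYXη)
    rwa [hfstY] at this
  have hκYη : ∀ᵐ y ∂PY, κY y = η y := by
    filter_upwards [hκYae, hηae] with y h1 h2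
    rw [h1, h2]
  -- PZX = PZb ⊗ₘ ηZ
  have hleftProd : ∀ᵐ p ∂(PY.prod PU), GdY (ΦY p.1) = p.1 := by
    have hfp : (PY.prod PU).map Prod.fst = PY := by rw [← Measure.fst, Measure.fst_prod]
    refine ae_of_ae_map (p := fun y => GdY (ΦY y) = y) measurable_fst.aemeasurable ?_
    rw [hfp]; exact hleft
  have hZXη : PZX = PZb.compProd ηZ := by
    have h1 : PZX = (PY.prod PU).map (fun p : Y × U => (ΦY p.1, GdX p)) := by
      calc PZX = ((PY.prod PU).map (fun p : Y × U => (p.1, GdX p))).map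
            (fun p : Y × X => (ΦY p.1, p.2)) := by rw [← hPZX, hYX]
        _ = (PY.prod PU).map
            ((fun p : Y × X => (ΦY p.1, p.2)) ∘ fun p : Y × U => (p.1, GdX p)) :=
            Measure.map_map hh hg
        _ = (PY.prod PU).map (fun p : Y × U => (ΦY p.1, GdX p)) := rfl
    have h2 : (fun p : Y × U => (ΦY p.1, GdX p))
        =ᵐ[PY.prod PU] fun p : Y × U => (ΦY p.1, GdX (GdY (ΦY p.1), p.2)) := by
      filter_upwards [hleftProd] with p hp
      rw [hp]
    calc PZX = (PY.prod PU).map (fun p : Y × U => (ΦY p.1, GdX (GdY (ΦY p.1), p.2))) := by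
          rw [h1]; exact Measure.map_congr h2
      _ = (PY.prod PU).map ((fun p : Z × U => (p.1, GdX (GdY p.1, p.2))) ∘ Prod.map ΦY id) := rfl
      _ = ((PY.prod PU).map (Prod.map ΦY id)).map (fun p : Z × U => (p.1, GdX (GdY p.1, p.2))) :=
          (Measure.map_map hg' (hΦY.prodMap measurable_id)).symm
      _ = ((PY.map ΦY).prod (PU.map id)).map (fun p : Z × U => (p.1, GdX (GdY p.1, p.2))) := by
          rw [Measure.map_prod_map _ _ hΦY measurable_id]
      _ = (PZb.prod PU).map (fun p : Z × U => (p.1, GdX (GdY p.1, p.2))) := by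
          rw [hPZb, Measure.map_id]
      _ = PZb.compProd ηZ := map_prod_eq_compProd_pushKernel PZb PU hGdX'
  -- a.e. uniqueness for κZ and ηZ
  have hκZηZ : ∀ᵐ z ∂PZb, κZ z = ηZ z := by
    have h1 := eq_condKernel_of_measure_eq_compProd κZ (ρ := PZX) (by rw [hfstZ]; exact hdisZ)
    have h2 := eq_condKernel_of_measure_eq_compProd ηZ (ρ := PZX) (by rw [hfstZ]; exact hZXη)
    rw [hfstZ] at h1 h2
    filter_upwards [h1, h2] with z hz1 hz2
    rw [hz1, hz2]
  -- pull back along ΦY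
  have hκZΦ : ∀ᵐ y ∂PY, κZ (ΦY y) = ηZ (ΦY y) := by
    refine ae_of_ae_map (p := fun z => κZ z = ηZ z) hΦY.aemeasurable ?_
    rw [hPZb]; exact hκZηZ
  -- main a.e. statement
  have hmain : ∀ᵐ y ∂PY, κZ (ΦY y) = PU.map (fun u => GdX (y, u))
      ∧ κY y = PU.map (fun u => GdX (y, u)) := by
    filter_upwards [hκZΦ, hκYη, hleft] with y h1 h2 h3
    have hηy : η y = PU.map (fun u => GdX (y, u)) := rfl
    have hηZy : ηZ (ΦY y) = PU.map (fun u => GdX (y, u)) := by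
      rw [hηZ, pushKernel_apply]
      simp only [h3]
    exact ⟨by rw [h1, hηZy], by rw [h2, hηy]⟩
  refine ⟨hmain, ?_⟩
  have hzero : (fun y => otCost cX (κY y) (κZ (ΦY y))) =ᵐ[PY] fun _ => 0 := by
    filter_upwards [hmain] with y hy
    rw [hy.2, ← hy.1]
    exact hrefl _ inferInstance
  rw [lintegral_congr_ae hzero, lintegral_zero]
end

section
/- Wasserstein autoencoder identity (Tolstikhin et al., Theorem 1): Let G : U → X be a measurable map. Then W_c(P_X, G # P_U) equals the infimum over all Markov kernels Q_{U|X} from X to U whose aggregated posterior Q_U = ∫ Q_{U|X=x} P_X(dx) equals P_U, of the expected cost E[c(X, G(U))] where X ∼ P_X and U ∼ Q_{U|X}. -/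
open MeasureTheory ProbabilityTheory
open scoped ENNReal

lemma map_snd_compProd' {α β : Type*} [MeasurableSpace α] [MeasurableSpace β]
    (μ : Measure α) [SFinite μ] (κ : Kernel α β) [IsSFiniteKernel κ] :
    (μ.compProd κ).map Prod.snd = μ.bind (fun x => κ x) := by
  ext s hs
  rw [Measure.map_apply measurable_snd hs, Measure.compProd_apply (measurable_snd hs),
    Measure.bind_apply hs (Kernel.measurable κ).aemeasurable]
  rfl


/-- WAE identity, Tolstikhin et al. Thm. 1: for a measurable `G : U → X`,
`W_c(P_X, G # P_U)` equals the infimum, over Markov kernels `Q = Q_{U|X}` whose aggregated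
posterior `∫ Q_{U|X=x} P_X(dx)` equals `P_U`, of the expected cost `E[c(X, G(U))]`
(expressed as the iterated integral against the joint law induced by `P_X` and `Q`). -/
theorem wae_identity
    {X U : Type*}
    [MeasurableSpace X] [TopologicalSpace X] [PolishSpace X] [BorelSpace X]
    [MeasurableSpace U] [TopologicalSpace U] [PolishSpace U] [BorelSpace U]
    (c : X → X → ℝ≥0∞) (hc : LowerSemicontinuous fun p : X × X => c p.1 p.2)
    (PX : Measure X) (PU : Measure U)
    [IsProbabilityMeasure PX] [IsProbabilityMeasure PU]
    (G : U → X) (hG : Measurable G) :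
    otCost c PX (PU.map G)
      = ⨅ Q ∈ {Q : Kernel X U | IsMarkovKernel Q ∧ PX.bind (fun x => Q x) = PU},
          ∫⁻ x, ∫⁻ u, c x (G u) ∂(Q x) ∂PX := by
  have hcm : Measurable (fun p : X × X => c p.1 p.2) := hc.measurable
  haveI : Nonempty X := by
    by_contra h
    rw [not_nonempty_iff] at h
    have h1 : PX Set.univ = 1 := measure_univ
    rw [Set.univ_eq_empty_iff.mpr h, measure_empty] at h1
    exact zero_ne_one h1
  haveI : Nonempty U := by
    by_contra h
    rw [not_nonempty_iff] at h
    have h1 : PU Set.univ = 1 := measure_univ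
    rw [Set.univ_eq_empty_iff.mpr h, measure_empty] at h1
    exact zero_ne_one h1
  have hcmG : Measurable (fun p : X × U => c p.1 (G p.2)) :=
    hcm.comp (measurable_fst.prodMk (hG.comp measurable_snd))
  apply le_antisymm
  · -- otCost ≤ inf over kernels
    refine le_iInf₂ fun Q hQ => ?_
    obtain ⟨hQmk, hQbind⟩ := hQ
    haveI := hQmk
    set μ := PX.compProd (Q : Kernel X U) with hμ
    have hmap : Measurable (Prod.map (id : X → X) G) := measurable_id.prodMap hG
    set π := μ.map (Prod.map id G) with hπ
    have h1 : π.map Prod.fst = PX := by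
      rw [hπ, Measure.map_map measurable_fst hmap]
      have : (Prod.fst ∘ Prod.map (id : X → X) G) = Prod.fst := rfl
      rw [this]
      exact Measure.fst_compProd PX Q
    have h2 : π.map Prod.snd = PU.map G := by
      rw [hπ, Measure.map_map measurable_snd hmap]
      have : (Prod.snd ∘ Prod.map (id : X → X) G) = G ∘ Prod.snd := rfl
      rw [this, ← Measure.map_map hG measurable_snd, map_snd_compProd', hQbind]
    have hint : ∫⁻ p, c p.1 p.2 ∂π = ∫⁻ x, ∫⁻ u, c x (G u) ∂(Q x) ∂PX := by
      rw [hπ, lintegral_map hcm hmap]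
      have : (fun p : X × U => c (Prod.map id G p).1 (Prod.map id G p).2)
          = fun p : X × U => c p.1 (G p.2) := rfl
      rw [this, hμ, Measure.lintegral_compProd hcmG]
    exact hint ▸ iInf₂_le π ⟨h1, h2⟩
  · -- inf over kernels ≤ otCost
    refine le_iInf₂ fun π hπ => ?_
    obtain ⟨hπ1, hπ2⟩ := hπ
    haveI : IsProbabilityMeasure π := by
      constructor
      have := congrArg (fun m : Measure X => m Set.univ) hπ1
      simpa [Measure.map_apply measurable_fst MeasurableSet.univ] using this
    set ν := PU.map G with hν
    have hGmk : Measurable fun u => (G u, u) := hG.prodMk measurable_id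
    set ρ : Measure (X × U) := PU.map (fun u => (G u, u)) with hρ
    haveI : IsProbabilityMeasure ρ := Measure.isProbabilityMeasure_map hGmk.aemeasurable
    have hρ_fst : ρ.fst = ν := by
      rw [hρ, Measure.fst, Measure.map_map measurable_fst hGmk]
      rfl
    have hρ_snd : ρ.map Prod.snd = PU := by
      rw [hρ, Measure.map_map measurable_snd hGmk]
      have : (Prod.snd ∘ fun u => (G u, u)) = id := rfl
      rw [this, Measure.map_id]
    set K := ρ.condKernel with hK
    have hρ_dis : ρ.fst ⊗ₘ K = ρ := ρ.disintegrate ρ.condKernel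
    -- a.e. concentration of K on fibers
    have hs : MeasurableSet {p : X × U | G p.2 = p.1} := by
      have he : {p : X × U | G p.2 = p.1}
          = (fun p : X × U => (G p.2, p.1)) ⁻¹' {q : X × X | q.1 = q.2} := rfl
      rw [he]
      exact ((hG.comp measurable_snd).prodMk measurable_fst)
        (isClosed_eq continuous_fst continuous_snd).measurableSet
    have hρs : ∀ᵐ p ∂ρ, G p.2 = p.1 := by
      rw [hρ, ae_map_iff hGmk.aemeasurable hs]
      filter_upwards with u using rfl
    have hae : ∀ᵐ y ∂ν, ∀ᵐ u ∂(K y), G u = y := by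
      have h := Measure.ae_ae_of_ae_compProd (μ := ρ.fst) (κ := K)
        (p := fun p : X × U => G p.2 = p.1) (by rw [hρ_dis]; exact hρs)
      rwa [hρ_fst] at h
    have haeK : ∀ᵐ y ∂ν, K y {u | G u = y} = 1 := by
      filter_upwards [hae] with y hy
      have h' : MeasurableSet {u | G u = y} := hG (measurableSet_singleton y)
      rw [← prob_compl_eq_zero_iff h']
      rw [ae_iff] at hy
      exact hy
    -- disintegrate π
    set Kπ := π.condKernel with hKπ
    have hπ_dis : π.fst ⊗ₘ Kπ = π := π.disintegrate π.condKernel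
    have hπfst : π.fst = PX := hπ1
    set Q : Kernel X U := K.comp Kπ with hQ
    haveI : IsMarkovKernel Q := by rw [hQ]; infer_instance
    have hbind : PX.bind (fun x => Q x) = PU := by
      have e1 : PX.bind (fun x => Kπ x) = ν := by
        rw [← hπfst, ← map_snd_compProd', hπ_dis, hπ2]
      have e2 : ν.bind (fun y => K y) = PU := by
        rw [← hρ_fst, ← map_snd_compProd', hρ_dis, hρ_snd]
      have : (fun x => Q x) = fun x => (Kπ x).bind (fun y => K y) := by
        funext x; rw [hQ, Kernel.comp_apply]
      rw [this, ← Measure.bind_bind (Kernel.measurable Kπ).aemeasurable (Kernel.measurable K).aemeasurable, e1, e2]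
    -- cost computation
    have hπae : ∀ᵐ p ∂π, K p.2 {u | G u = p.2} = 1 := by
      have hmeas : Measurable fun y => K y {u | G u = y} := by
        have := ProbabilityTheory.Kernel.measurable_kernel_prodMk_left (κ := K) hs
        simpa using this
      have hset : MeasurableSet {y | K y {u | G u = y} = 1} :=
        hmeas (measurableSet_singleton 1)
      have h := (ae_map_iff measurable_snd.aemeasurable hset).mp (hπ2 ▸ haeK)
      exact h
    have hFmeas : Measurable fun p : X × X => ∫⁻ u, c p.1 (G u) ∂(K p.2) := by
      have : Measurable fun q : (X × X) × U => c q.1.1 (G q.2) :=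
        hcm.comp ((measurable_fst.comp measurable_fst).prodMk (hG.comp measurable_snd))
      have h := Measurable.lintegral_kernel_prod_right'
        (κ := K.comap Prod.snd measurable_snd) this
      simpa [Kernel.comap_apply] using h
    have hcost : ∫⁻ x, ∫⁻ u, c x (G u) ∂(Q x) ∂PX = ∫⁻ p, c p.1 p.2 ∂π := by
      have step1 : ∀ x, ∫⁻ u, c x (G u) ∂(Q x)
          = ∫⁻ y, ∫⁻ u, c x (G u) ∂(K y) ∂(Kπ x) := fun x => by
        rw [hQ]
        exact Kernel.lintegral_comp K Kπ x
          (hcm.comp (measurable_const.prodMk hG))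
      calc ∫⁻ x, ∫⁻ u, c x (G u) ∂(Q x) ∂PX
          = ∫⁻ x, ∫⁻ y, ∫⁻ u, c x (G u) ∂(K y) ∂(Kπ x) ∂PX := by
            simp_rw [step1]
        _ = ∫⁻ p, ∫⁻ u, c p.1 (G u) ∂(K p.2) ∂(PX.compProd Kπ) := by
            rw [Measure.lintegral_compProd hFmeas]
        _ = ∫⁻ p, ∫⁻ u, c p.1 (G u) ∂(K p.2) ∂π := by rw [← hπfst, hπ_dis]
        _ = ∫⁻ p, c p.1 p.2 ∂π := by
            refine lintegral_congr_ae ?_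
            filter_upwards [hπae] with p hp
            have h' : MeasurableSet {u | G u = p.2} := hG (measurableSet_singleton p.2)
            have hpe : ∀ᵐ u ∂(K p.2), G u = p.2 := by
              rw [ae_iff]
              have := (prob_compl_eq_zero_iff h').mpr hp
              exact this
            rw [lintegral_congr_ae (hpe.mono fun u hu => by rw [hu])]
            simp
    exact hcost ▸ iInf₂_le Q ⟨inferInstance, hbind⟩
end
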